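/- For all positive integers n and m with n ≤ m, the number N of monotone nondecreasing functions f : Fin n → Fin m satisfies n^n · N ≤ 4^n · m^n, i.e., N ≤ (4m/n)^n. (This is the upper-bound half of the paper's key observation that n numbers in sorted order from a universe of size m have binary entropy n·log₂ m − Θ(n log n): a sorted list can be stored in n·log₂(m/n) + 2n bits.) -/
import Mathlib



lemma pow_mul_add_le (m n : ℕ) : m ^ n * (m + n + 1) ≤ (m + 1) ^ (n + 1) := by
  induction n with
  | zero => simp
  | succ n ih =>
    have h1 : m ^ (n+1) * (m + (n+1) + 1) ≤ m ^ n * (m + n + 1) * (m + 1) := by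
      ring_nf
      nlinarith [Nat.zero_le (m ^ n)]
    calc m ^ (n+1) * (m + (n+1) + 1) ≤ m ^ n * (m + n + 1) * (m + 1) := h1
      _ ≤ (m + 1) ^ (n+1) * (m + 1) := Nat.mul_le_mul_right _ ih
      _ = (m + 1) ^ (n + 1 + 1) := by ring

lemma key_choose (n m : ℕ) (hnm : n ≤ m) :
    n ^ n * (m + n).choose n ≤ (2 * n).choose n * m ^ n := by
  induction m, hnm using Nat.le_induction with
  | base => rw [show n + n = 2 * n by ring, mul_comm]
  | succ m hm ih =>
    -- identity: (m+n+1) * (m+n).choose n = (m+n+1).choose n * (m+1)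
    have hid : (m + n + 1) * (m + n).choose n = (m + n + 1).choose n * (m + 1) := by
      have h1 : (m + n + 1) * (m + n).choose n = (m + n + 1).choose (n + 1) * (n + 1) :=
        Nat.add_one_mul_choose_eq (m + n) n
      have h2 : (m + n + 1).choose (n + 1) * (n + 1) = (m + n + 1).choose n * (m + n + 1 - n) :=
        Nat.choose_succ_right_eq (m + n + 1) n
      rw [h1, h2]
      congr 1
      omega
    refine Nat.le_of_mul_le_mul_right ?_ (show 0 < m + 1 by omega)
    calc n ^ n * (m + 1 + n).choose n * (m + 1)
        = n ^ n * ((m + n + 1).choose n * (m + 1)) := by ring_nf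
      _ = n ^ n * ((m + n + 1) * (m + n).choose n) := by rw [hid]
      _ = (n ^ n * (m + n).choose n) * (m + n + 1) := by ring
      _ ≤ ((2 * n).choose n * m ^ n) * (m + n + 1) := Nat.mul_le_mul_right _ ih
      _ = (2 * n).choose n * (m ^ n * (m + n + 1)) := by ring
      _ ≤ (2 * n).choose n * (m + 1) ^ (n + 1) := Nat.mul_le_mul_left _ (pow_mul_add_le m n)
      _ = (2 * n).choose n * (m + 1) ^ n * (m + 1) := by ring

lemma card_monotone_le (n m : ℕ) (hn : 0 < n) (hm : 0 < m) :
    Nat.card {f : Fin n → Fin m // Monotone f} ≤ (m + n - 1).choose n := by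
  have hlt : ∀ (f : Fin n → Fin m) (i : Fin n), (f i : ℕ) + i < m + n - 1 := by
    intro f i
    have h1 : (f i : ℕ) < m := (f i).isLt
    have h2 : (i : ℕ) < n := i.isLt
    omega
  set g : {f : Fin n → Fin m // Monotone f} → Fin n → Fin (m + n - 1) :=
    fun f i => ⟨(f.1 i : ℕ) + i, hlt f.1 i⟩ with hg
  have hsm : ∀ f, StrictMono (g f) := by
    intro f i j hij
    have := f.2 hij.le
    simp only [hg, Fin.mk_lt_mk]
    have : (f.1 i : ℕ) ≤ f.1 j := this
    have : (i : ℕ) < j := hij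
    omega
  set G : {f : Fin n → Fin m // Monotone f} → {s : Finset (Fin (m + n - 1)) // s.card = n} :=
    fun f => ⟨Finset.univ.image (g f), by
      rw [Finset.card_image_of_injective _ (hsm f).injective, Finset.card_univ, Fintype.card_fin]⟩
  have hGinj : Function.Injective G := by
    intro f f' h
    have hset : (Finset.univ.image (g f) : Set (Fin (m + n - 1)))
        = (Finset.univ.image (g f') : Set (Fin (m + n - 1))) := by
      simp only [G] at h
      rw [Subtype.mk_eq_mk] at h
      rw [h]
    rw [Finset.coe_image, Finset.coe_image, Finset.coe_univ, Set.image_univ, Set.image_univ] at hset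
    have hgg : g f = g f' := (@StrictMono.range_inj (Fin n) (Fin (m + n - 1)) _ _ (inferInstanceAs (WellFoundedLT (Fin n))) _ _ (hsm f) (hsm f')).mp hset
    ext i
    have := congrFun hgg i
    simp only [hg, Fin.mk.injEq] at this
    omega
  calc Nat.card {f : Fin n → Fin m // Monotone f}
      ≤ Nat.card {s : Finset (Fin (m + n - 1)) // s.card = n} :=
        Nat.card_le_card_of_injective G hGinj
    _ = (m + n - 1).choose n := by
        rw [Nat.card_eq_fintype_card, Fintype.card_finset_len, Fintype.card_fin]

/-- Upper bound: the number `N` of monotone nondecreasing functions `f : Fin n → Fin m`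
satisfies `n^n * N ≤ 4^n * m^n`, i.e. `N ≤ (4m/n)^n`. -/
theorem sorted_count_upper_bound
    (n m : ℕ) (hn : 0 < n) (hm : 0 < m) (hnm : n ≤ m) :
    n ^ n * Nat.card {f : Fin n → Fin m // Monotone f} ≤ 4 ^ n * m ^ n := by
  calc n ^ n * Nat.card {f : Fin n → Fin m // Monotone f}
      ≤ n ^ n * (m + n - 1).choose n :=
        Nat.mul_le_mul_left _ (card_monotone_le n m hn hm)
    _ ≤ n ^ n * (m + n).choose n :=
        Nat.mul_le_mul_left _ (Nat.choose_le_choose n (by omega))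
    _ ≤ (2 * n).choose n * m ^ n := key_choose n m hnm
    _ ≤ 4 ^ n * m ^ n := by
        refine Nat.mul_le_mul_right _ ?_
        calc (2 * n).choose n ≤ (2 * n + 1).choose n := Nat.choose_le_choose n (by omega)
          _ ≤ 4 ^ n := Nat.choose_middle_le_pow n
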